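/- Define the linear map d: Cl(𝔤) → Cl(𝔤) by d(w) = γ·w − ε(w)·γ (the super-commutator with γ). Then d∘d = 0, and if Σ_{a,b,c} f_{abc}² ≠ 0 (i.e. 𝔤 is non-abelian), the differential d has trivial cohomology: every w ∈ Cl(𝔤) with d(w) = 0 lies in the image of d; explicitly, w = −(24/Σ_{a,b,c} f_{abc}²)·d(γ·w). -/

import Mathlib

/-!
Because `γ` is odd, `d ∘ d` is the commutator with `γ²`, and a cocycle `w` (i.e. `γ w = ε(w) γ`)
satisfies `d(γ w) = 2 γ² w`. Everything therefore reduces to `γ² = -(1/48) ∑ f_{abc}²`, a nonzero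
scalar when `𝔤` is non-abelian.

To compute `γ²`, let `g_a` be the image of `ad e_a` in `Cl(𝔤)`. Then `x_p γ + γ x_p = g_p` and
`g_p x_b - x_b g_p = ∑_c f_{pbc} x_c`; moving the `g`'s through the monomials of `γ` gives
`2 γ² = ∑_a g_a² + (1/12) ∑ f_{abc}²`. In `∑_a g_a²` the Jacobi identity kills the totally
antisymmetric quartic part, and only the contractions survive: `∑_a g_a² = -(1/8) ∑ f_{abc}²`.
-/

open Finset

theorem sum_rotate {ι M : Type*} [Fintype ι] [AddCommMonoid M] (F : ι → ι → ι → M) :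
    ∑ a, ∑ b, ∑ c, F a b c = ∑ a, ∑ b, ∑ c, F c a b := by
  rw [Finset.sum_comm]
  exact sum_congr rfl fun _ _ => Finset.sum_comm

/-- The structure constants `⟨[e_a, e_b], e_c⟩` of a Lie algebra in a basis that is orthonormal
for an invariant form. -/
structure IsQuadraticLieStructureConstants {ι R : Type*} [Fintype ι] [CommRing R]
    (f : ι → ι → ι → R) : Prop where
  antisymm : ∀ a b c, f b a c = -f a b c
  cyclic : ∀ a b c, f b c a = f a b c
  jacobi : ∀ r s b c, ∑ a, f a r s * f a b c + ∑ a, f a r b * f a c s + ∑ a, f a r c * f a s b = 0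

theorem IsQuadraticLieStructureConstants.antisymm' {ι R : Type*} [Fintype ι] [CommRing R]
    {f : ι → ι → ι → R} (hf : IsQuadraticLieStructureConstants f) (a b c : ι) :
    f a c b = -f a b c := by
  rw [← hf.cyclic, hf.antisymm, hf.cyclic]

namespace LinearMap.BilinForm
variable {R M ι : Type*} [CommRing R] [AddCommGroup M] [Module R M] [Fintype ι] [DecidableEq ι]
  {B : LinearMap.BilinForm R M} {e : Module.Basis ι R M}

theorem apply_basis_left (he : ∀ a b, B (e a) (e b) = if a = b then 1 else 0) (v : M) (a : ι) :
    B (e a) v = e.repr v a := by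
  conv_lhs => rw [← e.sum_repr v]
  simp only [map_sum, map_smul, he, smul_eq_mul, mul_ite, mul_one, mul_zero, sum_ite_eq, mem_univ,
    if_true]

theorem apply_basis_right (he : ∀ a b, B (e a) (e b) = if a = b then 1 else 0) (v : M) (a : ι) :
    B v (e a) = e.repr v a := by
  conv_lhs => rw [← e.sum_repr v]
  simp only [map_sum, map_smul, LinearMap.coe_sum, LinearMap.coe_smul, Finset.sum_apply,
    Pi.smul_apply, he, smul_eq_mul, mul_ite, mul_one, mul_zero, sum_ite_eq', mem_univ, if_true]

theorem apply_eq_sum_repr_mul_repr (he : ∀ a b, B (e a) (e b) = if a = b then 1 else 0)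
    (u v : M) : B u v = ∑ a, e.repr u a * e.repr v a := by
  conv_lhs => rw [← e.sum_repr u]
  simp only [map_sum, map_smul, LinearMap.coe_sum, LinearMap.coe_smul, Finset.sum_apply,
    Pi.smul_apply, apply_basis_left he, smul_eq_mul]

theorem lie_apply_eq_apply_lie {L : Type*} [LieRing L] [LieAlgebra R L]
    {B : LinearMap.BilinForm R L} (hB : B.lieInvariant L) (u v w : L) : B ⁅u, v⁆ w = B u ⁅v, w⁆ := by
  rw [← neg_neg (B u _), ← hB, ← lie_skew, map_neg, LinearMap.neg_apply]

end LinearMap.BilinForm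

open LinearMap.BilinForm in
theorem isQuadraticLieStructureConstants {R L ι : Type*} [CommRing R] [LieRing L]
    [LieAlgebra R L] [Fintype ι] [DecidableEq ι] {B : LinearMap.BilinForm R L}
    {e : Module.Basis ι R L} (hB : B.lieInvariant L)
    (he : ∀ a b, B (e a) (e b) = if a = b then 1 else 0) :
    IsQuadraticLieStructureConstants fun a b c => B ⁅e a, e b⁆ (e c) where
  antisymm a b c := by rw [← lie_skew, map_neg, LinearMap.neg_apply]
  cyclic a b c := by rw [apply_basis_right he, lie_apply_eq_apply_lie hB, apply_basis_left he]
  jacobi r s b c := by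
    simp only [lie_apply_eq_apply_lie hB, apply_basis_left he, ← apply_eq_sum_repr_mul_repr he]
    rw [← Finsupp.add_apply, ← Finsupp.add_apply, ← map_add, ← map_add, lie_jacobi, map_zero,
      Finsupp.zero_apply]

/-- The images of an orthonormal basis in the Clifford algebra of `Q(v) = ½⟨v, v⟩`. -/
def IsOrthonormalCliffordFamily {ι A : Type*} [DecidableEq ι] [Ring A] (x : ι → A) : Prop :=
  ∀ a b, x a * x b + x b * x a = if a = b then 1 else 0

theorem IsOrthonormalCliffordFamily.mul_mul_sub_mul_mul {ι A : Type*} [DecidableEq ι] [Ring A]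
    {x : ι → A} (hx : IsOrthonormalCliffordFamily x) (p a b : ι) :
    x p * (x a * x b) - x a * x b * x p
      = (if p = a then x b else 0) - (if p = b then x a else 0) := by
  have h₁ := hx p a
  have h₂ := hx p b
  split_ifs at h₁ h₂ ⊢ <;> linear_combination (norm := noncomm_ring) h₁ * x b - x a * h₂

theorem IsOrthonormalCliffordFamily.cyclic_sum_mul_mul {ι K A : Type*} [DecidableEq ι] [Field K]
    [Ring A] [Algebra K A] {x : ι → A} (hx : IsOrthonormalCliffordFamily x) (s b c : ι) :
    x s * x b * x c + x c * x s * x b + x b * x c * x s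
      = (3 : K) • (x s * x b * x c) + (if c = s then x b else 0) + (if s = c then x b else 0)
        - (if c = b then x s else 0) - (if s = b then x c else 0) := by
  have h₁ := hx.mul_mul_sub_mul_mul c s b
  have h₂ := hx.mul_mul_sub_mul_mul s b c
  simp only [mul_assoc] at h₁ h₂ ⊢
  linear_combination (norm := module) h₁ - h₂

section CliffordElements
variable {ι K A : Type*} [Fintype ι] [Field K] [Ring A] [Algebra K A]

/-- The paper's `g_p`, the image of `ad e_p` in the Clifford algebra. -/
def quadraticElement (f : ι → ι → ι → K) (x : ι → A) (p : ι) : A :=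
  (-(1 / 2 : K)) • ∑ r, ∑ s, f p r s • (x r * x s)

def cubicElement (f : ι → ι → ι → K) (x : ι → A) : A :=
  (-(1 / 6 : K)) • ∑ a, ∑ b, ∑ c, f a b c • (x a * x b * x c)

variable {f : ι → ι → ι → K} {x : ι → A}

theorem cubicElement_eq_sum_mul_quadraticElement :
    cubicElement f x = (3⁻¹ : K) • ∑ a, x a * quadraticElement f x a := by
  simp only [cubicElement, quadraticElement, mul_smul_comm, mul_sum, ← smul_sum, smul_smul,
    mul_assoc]
  congr 1
  rw [← neg_mul_eq_mul_neg, one_div, one_div, ← mul_inv]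
  norm_num

theorem sum_smul_mul_eq_neg_two_smul_quadraticElement [CharZero K] (a : ι) :
    ∑ b, ∑ c, f a b c • (x b * x c) = (-2 : K) • quadraticElement f x a := by
  rw [quadraticElement, smul_smul]; norm_num

theorem sum_smul_quadraticElement_mul_mul [CharZero K] :
    ∑ a, ∑ b, ∑ c, f a b c • (quadraticElement f x a * (x b * x c))
      = (-2 : K) • ∑ a, quadraticElement f x a * quadraticElement f x a := by
  rw [smul_sum]
  refine sum_congr rfl fun a _ => ?_
  rw [← mul_smul_comm, ← sum_smul_mul_eq_neg_two_smul_quadraticElement]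
  simp only [mul_sum, mul_smul_comm]

theorem sum_smul_mul_mul_quadraticElement [CharZero K] (hf : IsQuadraticLieStructureConstants f) :
    ∑ a, ∑ b, ∑ c, f a b c • (x a * x b * quadraticElement f x c)
      = (-2 : K) • ∑ a, quadraticElement f x a * quadraticElement f x a := by
  refine (sum_rotate fun a b c => f b c a • (x b * x c * quadraticElement f x a)).symm.trans ?_
  rw [smul_sum]
  refine sum_congr rfl fun a _ => ?_
  rw [← smul_mul_assoc, ← sum_smul_mul_eq_neg_two_smul_quadraticElement]
  simp only [sum_mul, smul_mul_assoc, hf.cyclic]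

theorem sum_quadraticElement_mul_self_eq_quartic [CharZero K] :
    ∑ a, quadraticElement f x a * quadraticElement f x a = (4⁻¹ : K) •
      ∑ r, x r * ∑ s, ∑ b, ∑ c, (∑ a, f a r s * f a b c) • (x s * x b * x c) := by
  calc ∑ a, quadraticElement f x a * quadraticElement f x a
      = (4⁻¹ : K) • ∑ a, ∑ r, ∑ s, ∑ b, ∑ c,
          (f a r s * f a b c) • (x r * (x s * x b * x c)) := by
        simp only [quadraticElement, smul_mul_smul_comm, ← smul_sum, sum_mul_sum, mul_assoc]
        rw [show (-(1 / 2 : K)) * -(1 / 2) = 4⁻¹ by norm_num]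
        exact congrArg _ (sum_congr rfl fun a _ => sum_congr rfl fun r _ => sum_comm)
    _ = (4⁻¹ : K) • ∑ r, ∑ s, ∑ b, ∑ c, ∑ a,
          (f a r s * f a b c) • (x r * (x s * x b * x c)) := by
        congr 1
        rw [sum_comm]; refine sum_congr rfl fun r _ => ?_
        rw [sum_comm]; refine sum_congr rfl fun s _ => ?_
        rw [sum_comm]; refine sum_congr rfl fun b _ => ?_
        rw [sum_comm]
    _ = _ := by simp only [mul_sum, sum_smul, mul_smul_comm]

end CliffordElements

section CliffordComputations
variable {ι K A : Type*} [Fintype ι] [DecidableEq ι] [Field K] [CharZero K] [Ring A]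
  [Algebra K A] {x : ι → A} {f : ι → ι → ι → K}

theorem IsOrthonormalCliffordFamily.sum_smul_mul_of_symm (hx : IsOrthonormalCliffordFamily x)
    (M : ι → ι → K) (hM : ∀ r s, M s r = M r s) :
    ∑ r, ∑ s, M r s • (x r * x s) = (2⁻¹ * ∑ r, M r r) • 1 := by
  have hswap : ∑ r, ∑ s, M r s • (x r * x s) = ∑ r, ∑ s, M r s • (x s * x r) := by
    rw [Finset.sum_comm]; simp only [hM]
  have htwo : (2 : K) • ∑ r, ∑ s, M r s • (x r * x s) = (∑ r, M r r) • 1 := by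
    rw [two_smul]
    nth_rewrite 2 [hswap]
    simp only [← sum_add_distrib, ← smul_add, hx _ _, smul_ite, smul_zero, sum_ite_eq, mem_univ,
      if_true, sum_smul]
  rw [mul_smul, ← htwo, inv_smul_smul₀ two_ne_zero]

theorem IsOrthonormalCliffordFamily.sum_smul_mul_sum_smul_self (hx : IsOrthonormalCliffordFamily x)
    (v : ι → K) :
    (∑ r, v r • x r) * (∑ s, v s • x s) = (2⁻¹ * ∑ r, v r ^ 2) • 1 := by
  simp only [sum_mul_sum, smul_mul_smul_comm, sq]
  exact hx.sum_smul_mul_of_symm _ fun r s => mul_comm (v s) (v r)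

-- Cyclically permuting the factors of a monomial changes it only by linear terms, and the cyclic
-- sum of the coefficients vanishes.
theorem IsOrthonormalCliffordFamily.sum_smul_cubic (hx : IsOrthonormalCliffordFamily x)
    (T : ι → ι → ι → K) (hanti : ∀ s b c, T s c b = -T s b c)
    (hcyc : ∀ s b c, T s b c + T b c s + T c s b = 0) :
    ∑ s, ∑ b, ∑ c, T s b c • (x s * x b * x c) = ∑ b, (∑ s, T s s b) • x b := by
  have hzero : ∑ s, ∑ b, ∑ c, T s b c • (x s * x b * x c + x c * x s * x b + x b * x c * x s)
      = 0 := by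
    have h₂ : ∑ s, ∑ b, ∑ c, T s b c • (x c * x s * x b)
        = ∑ s, ∑ b, ∑ c, T b c s • (x s * x b * x c) :=
      (sum_rotate fun s b c => T b c s • (x s * x b * x c)).symm
    have h₃ : ∑ s, ∑ b, ∑ c, T s b c • (x b * x c * x s)
        = ∑ s, ∑ b, ∑ c, T c s b • (x s * x b * x c) :=
      sum_rotate fun s b c => T s b c • (x b * x c * x s)
    simp only [smul_add, sum_add_distrib, h₂, h₃]
    simp only [← sum_add_distrib, ← add_smul, hcyc, zero_smul, sum_const_zero]
  have hT : ∀ s b, T s b s = -T s s b := fun s b => hanti s s b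
  have hdiag : ∀ s b, T s b b = 0 := fun s b => self_eq_neg.mp (hanti s b b)
  have hY : ∑ s, ∑ b, T s s b • x b = ∑ b, (∑ s, T s s b) • x b := by
    rw [sum_comm]; simp only [sum_smul]
  simp only [hx.cyclic_sum_mul_mul (K := K), smul_add, smul_sub, smul_ite, smul_zero,
    sum_add_distrib, sum_sub_distrib, sum_ite_eq, sum_ite_eq', sum_ite_irrel, sum_const_zero,
    mem_univ, if_true, smul_comm (T _ _ _) (3 : K), ← smul_sum, hT, hdiag, neg_smul,
    sum_neg_distrib, zero_smul, hY] at hzero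
  have h3 : (3 : K) • (∑ s, ∑ b, ∑ c, T s b c • (x s * x b * x c) - ∑ b, (∑ s, T s s b) • x b)
      = 0 := by
    rw [← hzero]; module
  exact sub_eq_zero.mp ((smul_eq_zero.mp h3).resolve_left three_ne_zero)

theorem quadraticElement_mul_sub_mul (hx : IsOrthonormalCliffordFamily x)
    (hf : IsQuadraticLieStructureConstants f) (p b : ι) :
    quadraticElement f x p * x b - x b * quadraticElement f x p = ∑ c, f p b c • x c := by
  have hpt : ∀ r s, x r * x s * x b - x b * (x r * x s)
      = (if b = s then x r else 0) - (if b = r then x s else 0) := fun r s => by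
    rw [← neg_sub, hx.mul_mul_sub_mul_mul]; abel
  have hsum : ∑ r, ∑ s, f p r s • (x r * x s * x b - x b * (x r * x s))
      = (-2 : K) • ∑ c, f p b c • x c := by
    simp only [hpt, smul_sub, smul_ite, smul_zero, sum_sub_distrib, sum_ite_eq, sum_ite_irrel,
      sum_const_zero, mem_univ, if_true, hf.antisymm' p b, neg_smul, sum_neg_distrib]
    module
  simp only [quadraticElement, smul_mul_assoc, mul_smul_comm, ← smul_sub, sum_mul, mul_sum,
    ← sum_sub_distrib]
  rw [hsum, smul_smul]
  norm_num

theorem mul_cubicElement_add_cubicElement_mul (hx : IsOrthonormalCliffordFamily x)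
    (hf : IsQuadraticLieStructureConstants f) (p : ι) :
    x p * cubicElement f x + cubicElement f x * x p = quadraticElement f x p := by
  have hpt : ∀ a, x p * (x a * quadraticElement f x a) + x a * quadraticElement f x a * x p
      = (if p = a then quadraticElement f x a else 0) + x a * ∑ c, f a p c • x c := fun a => by
    have h₁ := hx p a
    have h₂ := quadraticElement_mul_sub_mul hx hf a p
    split_ifs at h₁ ⊢ <;>
      linear_combination (norm := noncomm_ring) h₁ * quadraticElement f x a + x a * h₂
  have hcontr : ∑ a, x a * ∑ c, f a p c • x c = (2 : K) • quadraticElement f x p := by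
    simp only [quadraticElement, hf.antisymm p, neg_smul, sum_neg_distrib, mul_neg, mul_sum,
      mul_smul_comm]
    module
  rw [cubicElement_eq_sum_mul_quadraticElement, mul_smul_comm, smul_mul_assoc, ← smul_add,
    mul_sum, sum_mul, ← sum_add_distrib]
  simp only [hpt, sum_add_distrib, sum_ite_eq, mem_univ, if_true, hcontr]
  module

theorem sum_quadraticElement_mul_self (hx : IsOrthonormalCliffordFamily x)
    (hf : IsQuadraticLieStructureConstants f) :
    ∑ a, quadraticElement f x a * quadraticElement f x a
      = (-(1 / 8 : K) * ∑ a, ∑ b, ∑ c, f a b c ^ 2) • 1 := by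
  have hcubic : ∀ r, ∑ s, ∑ b, ∑ c, (∑ a, f a r s * f a b c) • (x s * x b * x c)
      = ∑ b, (∑ s, ∑ a, f a r s * f a s b) • x b := fun r =>
    hx.sum_smul_cubic _ (fun s b c => by simp only [hf.antisymm' _ b c, mul_neg, sum_neg_distrib])
      (hf.jacobi r)
  have hsymm : ∀ r b, ∑ s, ∑ a, f a b s * f a s r = ∑ s, ∑ a, f a r s * f a s b := fun r b => by
    refine sum_congr rfl fun s _ => sum_congr rfl fun a _ => ?_
    rw [hf.antisymm' a b s, hf.antisymm' a s r]; ring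
  have htrace : ∑ r, ∑ s, ∑ a, f a r s * f a s r = -∑ a, ∑ b, ∑ c, f a b c ^ 2 := by
    simp only [← sum_neg_distrib]
    refine sum_congr rfl fun r _ => sum_congr rfl fun s _ => sum_congr rfl fun a _ => ?_
    rw [hf.antisymm' a r s, ← hf.cyclic a r s]; ring
  rw [sum_quadraticElement_mul_self_eq_quartic]
  conv_lhs => simp only [hcubic, mul_sum, mul_smul_comm]
  rw [hx.sum_smul_mul_of_symm _ hsymm, htrace, smul_smul]
  congr 1; ring

theorem sum_smul_mul_quadraticElement_mul (hx : IsOrthonormalCliffordFamily x)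
    (hf : IsQuadraticLieStructureConstants f) :
    ∑ a, ∑ b, ∑ c, f a b c • (x a * quadraticElement f x b * x c)
      = (2 : K) • ∑ a, quadraticElement f x a * quadraticElement f x a
        + ∑ a, ∑ b, (∑ c, f a b c • x c) * (∑ c, f a b c • x c) := by
  have hmove : ∀ a b, x b * quadraticElement f x a
      = quadraticElement f x a * x b - ∑ c, f a b c • x c := fun a b => by
    rw [← quadraticElement_mul_sub_mul hx hf a b]; abel
  have hlocal : ∀ a, ∑ b, ∑ c, f a b c • (x b * quadraticElement f x a * x c)
      = (-2 : K) • (quadraticElement f x a * quadraticElement f x a)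
        - ∑ b, (∑ c, f a b c • x c) * (∑ c, f a b c • x c) := fun a => by
    simp only [hmove, sub_mul, smul_sub, sum_sub_distrib, mul_assoc, ← mul_smul_comm,
      ← sum_smul_mul_eq_neg_two_smul_quadraticElement, ← mul_sum]
  calc ∑ a, ∑ b, ∑ c, f a b c • (x a * quadraticElement f x b * x c)
      = ∑ a, ∑ b, ∑ c, -(f a b c • (x b * quadraticElement f x a * x c)) := by
        rw [sum_comm]
        exact sum_congr rfl fun b _ => sum_congr rfl fun a _ => sum_congr rfl fun c _ => by
          rw [hf.antisymm, neg_smul]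
    _ = _ := by
        simp only [sum_neg_distrib, hlocal, sum_sub_distrib, ← smul_sum]
        module

theorem cubicElement_mul_self (hx : IsOrthonormalCliffordFamily x)
    (hf : IsQuadraticLieStructureConstants f) :
    cubicElement f x * cubicElement f x = (-(1 / 48 : K) * ∑ a, ∑ b, ∑ c, f a b c ^ 2) • 1 := by
  have hanticomm : ∀ y, y * cubicElement f x + cubicElement f x * y
      = (-(1 / 6 : K)) • ∑ a, ∑ b, ∑ c, f a b c • (y * (x a * x b * x c) + x a * x b * x c * y) :=
    fun y => by
      simp only [cubicElement, mul_smul_comm, smul_mul_assoc, mul_sum, sum_mul, ← smul_add,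
        ← sum_add_distrib]
  have hγ := mul_cubicElement_add_cubicElement_mul hx hf
  have hleibniz : ∀ a b c, cubicElement f x * (x a * x b * x c) + x a * x b * x c * cubicElement f x
      = quadraticElement f x a * (x b * x c) - x a * quadraticElement f x b * x c
        + x a * x b * quadraticElement f x c := fun a b c => by
    linear_combination (norm := noncomm_ring) hγ a * (x b * x c) - x a * hγ b * x c
      + x a * x b * hγ c
  have hsq : ∑ a, ∑ b, (∑ c, f a b c • x c) * (∑ c, f a b c • x c)
      = (2⁻¹ * ∑ a, ∑ b, ∑ c, f a b c ^ 2 : K) • 1 := by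
    simp only [hx.sum_smul_mul_sum_smul_self, ← sum_smul, mul_sum]
  have htwice : (2 : K) • (cubicElement f x * cubicElement f x)
      = (2 : K) • ((-(1 / 48 : K) * ∑ a, ∑ b, ∑ c, f a b c ^ 2) • 1) := by
    rw [two_smul, hanticomm]
    simp only [hleibniz, smul_add, smul_sub, sum_add_distrib, sum_sub_distrib,
      sum_smul_quadraticElement_mul_mul, sum_smul_mul_quadraticElement_mul hx hf,
      sum_smul_mul_mul_quadraticElement hf, hsq, sum_quadraticElement_mul_self hx hf]
    module
  exact smul_right_injective A two_ne_zero htwice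

end CliffordComputations

section CliffordAlgebra
open CliffordAlgebra (involute involute_ι involute_involute ι_mul_ι_add_swap)

theorem isOrthonormalCliffordFamily_ι {ι K V : Type*} [DecidableEq ι] [Field K] [CharZero K]
    [AddCommGroup V] [Module K V] {Q : QuadraticForm K V} {B : LinearMap.BilinForm K V}
    (hQ : ∀ v, Q v = (1 / 2 : K) * B v v) {e : ι → V}
    (he : ∀ a b, B (e a) (e b) = if a = b then 1 else 0) :
    IsOrthonormalCliffordFamily fun a => CliffordAlgebra.ι Q (e a) := by
  intro a b
  have hpolar : QuadraticMap.polar Q (e a) (e b) = if a = b then 1 else 0 := by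
    rw [QuadraticMap.polar, hQ, hQ, hQ]
    simp only [map_add, LinearMap.add_apply, he, @eq_comm _ b a]
    split_ifs <;> norm_num
  rw [ι_mul_ι_add_swap, hpolar]
  split_ifs <;> simp

theorem involute_cubicElement {ι K V : Type*} [Fintype ι] [Field K] [AddCommGroup V] [Module K V]
    {Q : QuadraticForm K V} (f : ι → ι → ι → K) (e : ι → V) :
    involute (cubicElement f fun a => CliffordAlgebra.ι Q (e a))
      = -cubicElement f fun a => CliffordAlgebra.ι Q (e a) := by
  simp only [cubicElement, map_smul, map_sum, map_mul, involute_ι, neg_mul, mul_neg, neg_neg,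
    smul_neg, sum_neg_distrib]

variable {R M : Type*} [CommRing R] [AddCommGroup M] [Module R M] {Q : QuadraticForm R M}

def supercommutator (γ w : CliffordAlgebra Q) : CliffordAlgebra Q :=
  γ * w - involute w * γ

variable {γ : CliffordAlgebra Q} {c : R}

theorem supercommutator_supercommutator (hγ : involute γ = -γ)
    (hsq : γ * γ = algebraMap R _ c) (w : CliffordAlgebra Q) :
    supercommutator γ (supercommutator γ w) = 0 := by
  simp only [supercommutator, map_sub, map_mul, hγ, involute_involute]
  linear_combination (norm := noncomm_ring) hsq * w - w * hsq + Algebra.commutes c w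

theorem supercommutator_mul_of_supercommutator_eq_zero (hγ : involute γ = -γ)
    (hsq : γ * γ = algebraMap R _ c) {w : CliffordAlgebra Q} (hw : supercommutator γ w = 0) :
    supercommutator γ (γ * w) = (2 * c) • w := by
  have hcomm : γ * w = involute w * γ := sub_eq_zero.mp hw
  rw [supercommutator, map_mul, hγ, Algebra.smul_def, map_mul, map_ofNat]
  linear_combination (norm := noncomm_ring) (2 : CliffordAlgebra Q) * hsq * w - γ * hcomm

end CliffordAlgebra

theorem clifford_differential_acyclic_general
    {n : ℕ} {g : Type*} [LieRing g] [LieAlgebra ℝ g]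
    -- the ad-invariant inner product, as a symmetric bilinear form
    (ip : LinearMap.BilinForm ℝ g)
    (ip_inv : ∀ v w z : g, ip ⁅v, w⁆ z + ip w ⁅v, z⁆ = 0)
    -- an orthonormal basis
    (e : Module.Basis (Fin n) ℝ g)
    (he : ∀ a b, ip (e a) (e b) = if a = b then (1 : ℝ) else 0)
    -- the quadratic form Q(v) = ½⟨v,v⟩ and its Clifford algebra
    (Q : QuadraticForm ℝ g)
    (hQ : ∀ v, Q v = (1 / 2 : ℝ) * ip v v)
    -- structure constants
    (f : Fin n → Fin n → Fin n → ℝ)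
    (hf : ∀ a b c, f a b c = ip ⁅e a, e b⁆ (e c))
    -- the Clifford generators
    (x : Fin n → CliffordAlgebra Q)
    (hx : ∀ a, x a = CliffordAlgebra.ι Q (e a))
    -- the element γ
    (γ : CliffordAlgebra Q)
    (hγ : γ = (-(1 / 6 : ℝ)) • ∑ a, ∑ b, ∑ c, f a b c • (x a * x b * x c))
    -- the super-commutator with γ (ε = parity involution)
    (d : CliffordAlgebra Q → CliffordAlgebra Q)
    (hd : ∀ w, d w = γ * w - CliffordAlgebra.involute w * γ) :
    (∀ w, d (d w) = 0) ∧
    ((∑ a, ∑ b, ∑ c, (f a b c) ^ 2) ≠ 0 →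
      ∀ w, d w = 0 → w = (-(24 / ∑ a, ∑ b, ∑ c, (f a b c) ^ 2)) • d (γ * w)) := by
  have hinv : ip.lieInvariant g := fun v w z => eq_neg_of_add_eq_zero_left (ip_inv v w z)
  have hfS : IsQuadraticLieStructureConstants f := by
    rw [show f = _ from funext₃ hf]; exact isQuadraticLieStructureConstants hinv he
  obtain rfl : x = fun a => CliffordAlgebra.ι Q (e a) := funext hx
  obtain rfl : d = supercommutator γ := funext hd
  have hsq : γ * γ = algebraMap ℝ _ (-(1 / 48) * ∑ a, ∑ b, ∑ c, f a b c ^ 2) := by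
    rw [hγ, Algebra.algebraMap_eq_smul_one]
    exact cubicElement_mul_self (isOrthonormalCliffordFamily_ι hQ he) hfS
  have hodd : CliffordAlgebra.involute γ = -γ := by
    rw [hγ]; exact involute_cubicElement f e
  refine ⟨supercommutator_supercommutator hodd hsq, fun hS w hw => ?_⟩
  rw [supercommutator_mul_of_supercommutator_eq_zero hodd hsq hw, smul_smul]
  field_simp
  norm_num

/-- The super-commutator `d(w) = γ·w − ε(w)·γ` with the cubic element `γ`
is a differential on `Cl(𝔤)` (`d∘d = 0`), and if `∑ f_{abc}² ≠ 0` (i.e. `𝔤` is non-abelian)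
its cohomology is trivial: every cocycle `w` satisfies `w = −(24/∑ f_{abc}²)·d(γ·w)`. -/
theorem clifford_differential_acyclic
    {n : ℕ} {g : Type*} [LieRing g] [LieAlgebra ℝ g]
    -- the ad-invariant inner product, as a symmetric bilinear form
    (ip : LinearMap.BilinForm ℝ g)
    (ip_symm : ∀ v w : g, ip v w = ip w v)
    (ip_inv : ∀ v w z : g, ip ⁅v, w⁆ z + ip w ⁅v, z⁆ = 0)
    -- an orthonormal basis
    (e : Module.Basis (Fin n) ℝ g)
    (he : ∀ a b, ip (e a) (e b) = if a = b then (1 : ℝ) else 0)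
    -- the quadratic form Q(v) = ½⟨v,v⟩ and its Clifford algebra
    (Q : QuadraticForm ℝ g)
    (hQ : ∀ v, Q v = (1 / 2 : ℝ) * ip v v)
    -- structure constants
    (f : Fin n → Fin n → Fin n → ℝ)
    (hf : ∀ a b c, f a b c = ip ⁅e a, e b⁆ (e c))
    -- the Clifford generators
    (x : Fin n → CliffordAlgebra Q)
    (hx : ∀ a, x a = CliffordAlgebra.ι Q (e a))
    -- the element γ
    (γ : CliffordAlgebra Q)
    (hγ : γ = (-(1 / 6 : ℝ)) • ∑ a, ∑ b, ∑ c, f a b c • (x a * x b * x c))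
    -- the super-commutator with γ (ε = parity involution)
    (d : CliffordAlgebra Q → CliffordAlgebra Q)
    (hd : ∀ w, d w = γ * w - CliffordAlgebra.involute w * γ) :
    (∀ w, d (d w) = 0) ∧
    ((∑ a, ∑ b, ∑ c, (f a b c) ^ 2) ≠ 0 →
      ∀ w, d w = 0 → w = (-(24 / ∑ a, ∑ b, ∑ c, (f a b c) ^ 2)) • d (γ * w)) :=
  clifford_differential_acyclic_general ip ip_inv e he Q hQ f hf x hx γ hγ d hd
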